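/- ε-approximate termination correctness (Algorithm 2 of DO-GAN): let Π_r ⊆ ι and Π_c ⊆ κ be nonempty restricted strategy subsets, let (σ*, τ*) be a mixed Nash equilibrium of the restricted game with equilibrium payoff v = U(σ*, τ*), and let ε > 0. If genInc = (max over i in ι of ∑ j, τ* j * U i j) − v < ε and disInc = v − (min over j in κ of ∑ i, σ* i * U i j) < ε, then (σ*, τ*) is an ε-Nash equilibrium of the full game: U(σ, τ*) ≤ U(σ*, τ*) + ε for every mixed strategy σ on ι, and U(σ*, τ) ≥ U(σ*, τ*) − ε for every mixed strategy τ on κ. -/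

import Mathlib

/-!
Against a fixed opponent strategy, the payoff of a mixed strategy is an average of the payoffs of
pure strategies, hence lies between the worst and the best pure response. So `genInc < ε` and
`disInc < ε` bound by `ε` what either player can gain by deviating in the full game.
-/

open Finset

/-- Expected payoff of the matrix game `U` under mixed strategies `σ` and `τ`. -/
def pay {ι κ : Type*} [Fintype ι] [Fintype κ] (U : ι → κ → ℝ) (σ : ι → ℝ) (τ : κ → ℝ) : ℝ :=
  ∑ i, ∑ j, σ i * τ j * U i j

section StdSimplex

variable {ι : Type*} [Fintype ι] [Nonempty ι] {w : ι → ℝ}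

theorem sum_mul_le_sup'_of_mem_stdSimplex (hw : w ∈ stdSimplex ℝ ι) (f : ι → ℝ) :
    ∑ i, w i * f i ≤ univ.sup' univ_nonempty f := by
  have h := centerMass_le_sup (s := univ) (f := f) (fun i _ => hw.1 i)
    (by rw [hw.2]; exact one_pos)
  rwa [centerMass_eq_of_sum_1 _ _ hw.2] at h

theorem inf'_le_sum_mul_of_mem_stdSimplex (hw : w ∈ stdSimplex ℝ ι) (f : ι → ℝ) :
    univ.inf' univ_nonempty f ≤ ∑ i, w i * f i := by
  have h := inf_le_centerMass (s := univ) (f := f) (fun i _ => hw.1 i)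
    (by rw [hw.2]; exact one_pos)
  rwa [centerMass_eq_of_sum_1 _ _ hw.2] at h

end StdSimplex

section Pay

variable {ι κ : Type*} [Fintype ι] [Fintype κ] (U : ι → κ → ℝ)

theorem pay_eq_sum_rows (σ : ι → ℝ) (τ : κ → ℝ) :
    pay U σ τ = ∑ i, σ i * ∑ j, τ j * U i j := by
  simp only [pay, mul_sum, mul_assoc]

theorem pay_eq_sum_cols (σ : ι → ℝ) (τ : κ → ℝ) :
    pay U σ τ = ∑ j, τ j * ∑ i, σ i * U i j := by
  rw [pay, sum_comm]
  simp only [mul_sum, mul_left_comm, mul_assoc]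

theorem pay_le_sup'_of_mem_stdSimplex [Nonempty ι] (τ : κ → ℝ) {σ : ι → ℝ}
    (hσ : σ ∈ stdSimplex ℝ ι) :
    pay U σ τ ≤ univ.sup' univ_nonempty (fun i => ∑ j, τ j * U i j) :=
  pay_eq_sum_rows U σ τ ▸ sum_mul_le_sup'_of_mem_stdSimplex hσ _

theorem inf'_le_pay_of_mem_stdSimplex [Nonempty κ] (σ : ι → ℝ) {τ : κ → ℝ}
    (hτ : τ ∈ stdSimplex ℝ κ) :
    univ.inf' univ_nonempty (fun j => ∑ i, σ i * U i j) ≤ pay U σ τ :=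
  pay_eq_sum_cols U σ τ ▸ inf'_le_sum_mul_of_mem_stdSimplex hτ _

end Pay

theorem double_oracle_eps_termination_general {ι κ : Type*}
    [Fintype ι] [Fintype κ] [Nonempty ι] [Nonempty κ] (U : ι → κ → ℝ)
    (σs : ι → ℝ) (τs : κ → ℝ) (ε : ℝ)
    (v : ℝ) (hv : v = pay U σs τs)
    (hGenInc :
      Finset.univ.sup' Finset.univ_nonempty (fun i => ∑ j, τs j * U i j) - v < ε)
    (hDisInc :
      v - Finset.univ.inf' Finset.univ_nonempty (fun j => ∑ i, σs i * U i j) < ε) :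
    (∀ σ ∈ stdSimplex ℝ ι, pay U σ τs ≤ pay U σs τs + ε) ∧
    (∀ τ ∈ stdSimplex ℝ κ, pay U σs τs - ε ≤ pay U σs τ) := by
  subst hv
  refine ⟨fun σ hσ => ?_, fun τ hτ => ?_⟩
  · linarith [pay_le_sup'_of_mem_stdSimplex U τs hσ]
  · linarith [inf'_le_pay_of_mem_stdSimplex U σs hτ]

/-- ε-approximate termination correctness of DO-GAN (Algorithm 2): if `(σ*, τ*)` is a mixed
Nash equilibrium of the restricted game with payoff `v = U(σ*, τ*)` and the best-response
utility increments `genInc` and `disInc` are both below `ε`, then `(σ*, τ*)` is an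
ε-Nash equilibrium of the full game. -/
theorem double_oracle_eps_termination {ι κ : Type*}
    [Fintype ι] [Fintype κ] [Nonempty ι] [Nonempty κ] (U : ι → κ → ℝ)
    (Pr : Finset ι) (Pc : Finset κ) (hr : Pr.Nonempty) (hc : Pc.Nonempty)
    (σs : ι → ℝ) (τs : κ → ℝ) (ε : ℝ) (hε : 0 < ε)
    (hσ : σs ∈ stdSimplex ℝ ι) (hτ : τs ∈ stdSimplex ℝ κ)
    (hσsupp : ∀ i ∉ Pr, σs i = 0) (hτsupp : ∀ j ∉ Pc, τs j = 0)
    (hRestrNE_r : ∀ σ ∈ stdSimplex ℝ ι, (∀ i ∉ Pr, σ i = 0) → pay U σ τs ≤ pay U σs τs)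
    (hRestrNE_c : ∀ τ ∈ stdSimplex ℝ κ, (∀ j ∉ Pc, τ j = 0) → pay U σs τs ≤ pay U σs τ)
    (v : ℝ) (hv : v = pay U σs τs)
    (hGenInc :
      Finset.univ.sup' Finset.univ_nonempty (fun i => ∑ j, τs j * U i j) - v < ε)
    (hDisInc :
      v - Finset.univ.inf' Finset.univ_nonempty (fun j => ∑ i, σs i * U i j) < ε) :
    (∀ σ ∈ stdSimplex ℝ ι, pay U σ τs ≤ pay U σs τs + ε) ∧
    (∀ τ ∈ stdSimplex ℝ κ, pay U σs τs - ε ≤ pay U σs τ) :=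
  double_oracle_eps_termination_general U σs τs ε v hv hGenInc hDisInc
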